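/- Let p be a prime and let G be a group with a normal subgroup H of index p such that H is a finite, nontrivial p-group. Suppose there exists a simple virtual endomorphism φ : H → G whose image φ(H) is a regular p-group, i.e., for all a, b ∈ φ(H) there exists c in the commutator subgroup of the subgroup generated by a and b such that (a·b)^p = a^p · b^p · c^p. Then there exists an element of order p in G \ H (the extension splits), and every element of H satisfies h^p = 1 (H has exponent p). -/

import Mathlib

/-!
Let `S₁` be the set of elements of `H` of order dividing `p` and `S₂` the set of `p`-th powers
of elements of `H`. Both generate normal subgroups of `G` contained in `H`, so simplicity of `φ`
forces each of them to be trivial as soon as `φ` maps it into the subgroup it generates.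

`S₁` is nontrivial since `H` is a nontrivial `p`-group, and `φ` maps `S₁` into `S₁` unless some
`x ∈ S₁` has `φ x ∉ H`; so such an `x` exists and `a = φ x` is an element of order `p` outside `H`.

Since `G ⧸ H` has prime order, every `q ∈ φ(H)` is `a ^ i * u` with `u ∈ H ∩ φ(H)`, and every
commutator of `G` lies in `H`. Regularity of `φ(H)` then gives `q ^ p = u ^ p * c ^ p` with
`u, c ∈ H`, so `φ` maps `S₂` into the subgroup it generates, which is therefore trivial.
-/

section

open Subgroup

variable {G : Type*} [Group G]

def IsSimpleVirtualEndomorphism {H : Subgroup G} (φ : H →* G) : Prop :=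
  ∀ N : Subgroup G, N.Normal → ∀ hle : N ≤ H, (∀ x, ∀ hx : x ∈ N, φ ⟨x, hle hx⟩ ∈ N) → N = ⊥

def Subgroup.IsRegular (R : Subgroup G) (p : ℕ) : Prop :=
  ∀ a b : G, a ∈ R → b ∈ R →
    ∃ c ∈ ⁅closure ({a, b} : Set G), closure ({a, b} : Set G)⁆, (a * b) ^ p = a ^ p * b ^ p * c ^ p

theorem IsPGroup.exists_orderOf_eq_prime {p : ℕ} [Fact p.Prime] [Nontrivial G]
    (hG : IsPGroup p G) : ∃ g : G, orderOf g = p := by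
  obtain ⟨g, hg⟩ := exists_ne (1 : G)
  exact ⟨g ^ (orderOf g / p), orderOf_pow_orderOf_div
    ((hG.isOfFinOrder (Fact.out : p.Prime).ne_zero g).orderOf_pos.ne') (hG.dvd_orderOf hg)⟩

theorem Subgroup.closure_normal_of_conj_mem {S : Set G}
    (hS : ∀ g, ∀ x ∈ S, g * x * g⁻¹ ∈ S) : (closure S).Normal := by
  have hconj : Group.conjugatesOfSet S = S := by
    refine subset_antisymm (fun x hx => ?_) Group.subset_conjugatesOfSet
    obtain ⟨a, ha, hax⟩ := Group.mem_conjugatesOfSet_iff.1 hx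
    obtain ⟨c, rfl⟩ := isConj_iff.1 hax
    exact hS c a ha
  rw [← hconj]
  exact normalClosure_normal

theorem Subgroup.commutator_le_of_index_prime {p : ℕ} [Fact p.Prime] {H : Subgroup G} [H.Normal]
    (hidx : H.index = p) : _root_.commutator G ≤ H :=
  have : IsCyclic (G ⧸ H) := isCyclic_of_prime_card hidx
  Normal.quotient_commutative_iff_commutator_le.1 IsCyclic.isMulCommutative

theorem Subgroup.exists_zpow_inv_mul_mem_of_index_prime {p : ℕ} [Fact p.Prime] {H : Subgroup G}
    [H.Normal] (hidx : H.index = p) {a : G} (ha : a ∉ H) (q : G) : ∃ i : ℤ, (a ^ i)⁻¹ * q ∈ H := by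
  have hgen : zpowers (a : G ⧸ H) = ⊤ :=
    zpowers_eq_top_of_prime_card hidx (mt (QuotientGroup.eq_one_iff a).1 ha)
  obtain ⟨i, hi⟩ := mem_zpowers_iff.1 (hgen ▸ mem_top (q : G ⧸ H))
  exact ⟨i, QuotientGroup.eq.1 (by rw [QuotientGroup.mk_zpow, hi])⟩

section VirtualEndomorphism

variable {H : Subgroup G} {φ : H →* G}

theorem IsSimpleVirtualEndomorphism.closure_eq_bot (hφ : IsSimpleVirtualEndomorphism φ)
    {S : Set G} (hSH : S ⊆ H) (hS : ∀ g, ∀ x ∈ S, g * x * g⁻¹ ∈ S)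
    (hφS : ∀ x, ∀ hx : x ∈ S, φ ⟨x, hSH hx⟩ ∈ closure S) : closure S = ⊥ := by
  have hinv : closure S ≤ ((closure S).comap φ).map H.subtype :=
    (closure_le _).2 fun x hx => ⟨⟨x, hSH hx⟩, hφS x hx, rfl⟩
  refine hφ _ (closure_normal_of_conj_mem hS) ((closure_le H).2 hSH) fun x hx => ?_
  obtain ⟨y, hy, rfl⟩ := hinv hx
  exact hy

theorem IsSimpleVirtualEndomorphism.exists_pow_eq_one_map_notMem
    (hφ : IsSimpleVirtualEndomorphism φ) [H.Normal] {p : ℕ} {z : G} (hzH : z ∈ H) (hz1 : z ≠ 1)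
    (hzp : z ^ p = 1) : ∃ x : H, x ^ p = 1 ∧ φ x ∉ H := by
  by_contra! hcon
  let S : Set G := {w | w ∈ H ∧ w ^ p = 1}
  have hSH : S ⊆ H := fun w hw => hw.1
  have hbot : closure S = ⊥ := by
    refine hφ.closure_eq_bot hSH (fun g w hw => ⟨Normal.conj_mem ‹_› w hw.1 g, ?_⟩) fun w hw => ?_
    · rw [conj_pow, hw.2, mul_one, mul_inv_cancel]
    · have hwp : (⟨w, hw.1⟩ : H) ^ p = 1 := Subtype.ext hw.2
      exact subset_closure ⟨hcon _ hwp, by rw [← map_pow, hwp, map_one]⟩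
  exact hz1 (closure_eq_bot_iff.1 hbot ⟨hzH, hzp⟩)

theorem IsSimpleVirtualEndomorphism.pow_eq_one_of_range_pow_mem [H.Normal]
    (hφ : IsSimpleVirtualEndomorphism φ) {p : ℕ}
    (hpow : ∀ q ∈ φ.range, q ^ p ∈ Subgroup.closure ((· ^ p) '' (H : Set G))) :
    ∀ h ∈ H, h ^ p = 1 := by
  have hSH : (· ^ p) '' (H : Set G) ⊆ H := by
    rintro _ ⟨h, hh, rfl⟩
    exact pow_mem hh p
  have hbot : Subgroup.closure ((· ^ p) '' (H : Set G)) = ⊥ := by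
    refine hφ.closure_eq_bot hSH (fun g _ ⟨h, hh, hx⟩ => ⟨g * h * g⁻¹, Normal.conj_mem ‹_› h hh g,
      by rw [← hx]; exact conj_pow⟩) ?_
    rintro _ ⟨h, hh, rfl⟩
    rw [show (⟨h ^ p, _⟩ : H) = ⟨h, hh⟩ ^ p from rfl, map_pow]
    exact hpow _ ⟨⟨h, hh⟩, rfl⟩
  exact fun h hh => closure_eq_bot_iff.1 hbot ⟨h, hh, rfl⟩

end VirtualEndomorphism

theorem Subgroup.IsRegular.pow_mem_closure_pow_image {p : ℕ} {H R : Subgroup G}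
    (hR : R.IsRegular p) (hcomm : _root_.commutator G ≤ H) {a : G} (haR : a ∈ R) (hap : a ^ p = 1)
    (hgen : ∀ q : G, ∃ i : ℤ, (a ^ i)⁻¹ * q ∈ H) {q : G} (hq : q ∈ R) :
    q ^ p ∈ Subgroup.closure ((· ^ p) '' (H : Set G)) := by
  obtain ⟨i, hu⟩ := hgen q
  obtain ⟨c, hc, hpow⟩ := hR _ _ (R.zpow_mem haR i) (R.mul_mem (R.inv_mem (R.zpow_mem haR i)) hq)
  have hcH : c ∈ H := hcomm (commutator_mono le_top le_top hc)
  have haip : (a ^ i) ^ p = 1 := by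
    rw [← zpow_natCast, ← zpow_mul, mul_comm, zpow_mul, zpow_natCast, hap, one_zpow]
  rw [← mul_inv_cancel_left (a ^ i) q, hpow, haip, one_mul]
  exact mul_mem (subset_closure ⟨_, hu, rfl⟩) (subset_closure ⟨c, hcH, rfl⟩)

end

theorem regular_image_implies_split_and_exponent_p_general
    (p : ℕ) (hp : p.Prime) (G : Type*) [Group G]
    (H : Subgroup G) [H.Normal] (hidx : H.index = p)
    (hne : H ≠ ⊥) (hpG : IsPGroup p H)
    (φ : H →* G)
    (hsimple : ∀ N : Subgroup G, N.Normal → ∀ hle : N ≤ H,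
        (∀ x, ∀ hx : x ∈ N, φ ⟨x, hle hx⟩ ∈ N) → N = ⊥)
    (hreg : ∀ a b : G, a ∈ φ.range → b ∈ φ.range →
      ∃ c ∈ ⁅Subgroup.closure ({a, b} : Set G), Subgroup.closure ({a, b} : Set G)⁆,
        (a * b) ^ p = a ^ p * b ^ p * c ^ p) :
    (∃ a : G, a ∉ H ∧ orderOf a = p) ∧ ∀ h ∈ H, h ^ p = 1 := by
  have : Fact p.Prime := ⟨hp⟩
  have : Nontrivial H := (Subgroup.nontrivial_iff_ne_bot H).2 hne
  have hφ : IsSimpleVirtualEndomorphism φ := hsimple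
  have hR : φ.range.IsRegular p := hreg
  obtain ⟨z, hz⟩ := hpG.exists_orderOf_eq_prime
  rw [← Subgroup.orderOf_coe, orderOf_eq_prime_iff] at hz
  obtain ⟨x, hxp, hxH⟩ := hφ.exists_pow_eq_one_map_notMem z.2 hz.2 hz.1
  have hap : φ x ^ p = 1 := by rw [← map_pow, hxp, map_one]
  refine ⟨⟨φ x, hxH, orderOf_eq_prime hap fun h => hxH (h ▸ H.one_mem)⟩, ?_⟩
  exact hφ.pow_eq_one_of_range_pow_mem fun q hq =>
    hR.pow_mem_closure_pow_image (Subgroup.commutator_le_of_index_prime hidx) ⟨x, rfl⟩ hap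
      (Subgroup.exists_zpow_inv_mul_mem_of_index_prime hidx hxH) hq

/-- **Proposition (regular image).**
Let `G` be a group with a normal subgroup `H` of index `p`, where `H` is a
finite nontrivial `p`-group.  Suppose `φ : H → G` is a simple virtual
endomorphism whose image `φ(H)` is a regular `p`-group: for all
`a, b ∈ φ(H)` there is `c ∈ [⟨a,b⟩, ⟨a,b⟩]` with `(ab)^p = a^p b^p c^p`.
Then the extension splits (there is an element of order `p` in `G \ H`) and
`H` has exponent `p`. -/
theorem regular_image_implies_split_and_exponent_p
    (p : ℕ) (hp : p.Prime) (G : Type*) [Group G]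
    (H : Subgroup G) [H.Normal] (hidx : H.index = p)
    [Finite H] (hne : H ≠ ⊥) (hpG : IsPGroup p H)
    (φ : H →* G)
    (hsimple : ∀ N : Subgroup G, N.Normal → ∀ hle : N ≤ H,
        (∀ x, ∀ hx : x ∈ N, φ ⟨x, hle hx⟩ ∈ N) → N = ⊥)
    (hreg : ∀ a b : G, a ∈ φ.range → b ∈ φ.range →
      ∃ c ∈ ⁅Subgroup.closure ({a, b} : Set G), Subgroup.closure ({a, b} : Set G)⁆,
        (a * b) ^ p = a ^ p * b ^ p * c ^ p) :
    (∃ a : G, a ∉ H ∧ orderOf a = p) ∧ ∀ h ∈ H, h ^ p = 1 :=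
  regular_image_implies_split_and_exponent_p_general p hp G H hidx hne hpG φ hsimple hreg
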